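/- Let N ≥ 1, 1 ≤ k ≤ N, d ≥ 1, H ≥ 0, let z_1, …, z_N : ℝ^d → ℝ be affine logits with Top-k routing cells V(I), and for each i ∈ {1, …, N} let A_i be a family of H affine hyperplanes in ℝ^d. For each k-subset I set A_I := ⋃_{i∈I} A_i (so |A_I| ≤ kH). Then the total number of linear regions of the Top-k MoE layer satisfies ∑_{I ⊆ {1,…,N}, |I|=k} (number of connected components of interior(V(I)) \ ⋃_{H'∈A_I} H') ≤ binomial(N, k) · Φ(kH, d), where Φ(n, d) = ∑_{j=0}^{d} binomial(n, j) (the Combinatorial Slicing upper bound). -/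

import Mathlib

/-- Zaslavsky's function `Φ(n, d) = ∑_{j=0}^{d} C(n, j)`. -/
def Phi (n d : ℕ) : ℕ := ∑ j ∈ Finset.range (d + 1), Nat.choose n j

lemma Phi_succ (m n : ℕ) : Phi m (n + 1) = Phi m n + m.choose (n + 1) := by
  simp [Phi, Finset.sum_range_succ]

lemma Phi_pascal (m n : ℕ) : Phi (m + 1) (n + 1) = Phi m (n + 1) + Phi m n := by
  induction n with
  | zero => simp [Phi, Finset.sum_range_succ]; omega
  | succ n ih =>
      rw [Phi_succ, ih, Nat.choose_succ_succ m (n + 1), Phi_succ m (n + 1)]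
      simp only [Nat.succ_eq_add_one]
      rw [Phi_succ m n]
      omega

lemma Phi_mono_left {m m' : ℕ} (h : m ≤ m') (d : ℕ) : Phi m d ≤ Phi m' d :=
  Finset.sum_le_sum fun j _ => Nat.choose_le_choose j h

lemma one_le_Phi (m d : ℕ) : 1 ≤ Phi m d := by
  have : m.choose 0 ≤ Phi m d :=
    Finset.single_le_sum (f := fun j => m.choose j) (fun _ _ => Nat.zero_le _)
      (Finset.mem_range.mpr (Nat.succ_pos d))
  simpa using this

/-- The set of strict sign vectors realized by a family of affine functionals. -/
def realized {V : Type*} [AddCommGroup V] [Module ℝ V] {M : ℕ}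
    (g : Fin M → (V →ᵃ[ℝ] ℝ)) : Set (Fin M → Bool) :=
  {σ | ∃ x : V, ∀ i, g i x ≠ 0 ∧ (0 < g i x ↔ σ i = true)}

lemma sign_lineMap {V : Type*} [AddCommGroup V] [Module ℝ V]
    (φ : V →ᵃ[ℝ] ℝ) {x y : V} {t : ℝ} (ht0 : 0 ≤ t) (ht1 : t ≤ 1) {b : Bool}
    (hx : φ x ≠ 0 ∧ (0 < φ x ↔ b = true)) (hy : φ y ≠ 0 ∧ (0 < φ y ↔ b = true)) :
    φ (AffineMap.lineMap x y t) ≠ 0 ∧ (0 < φ (AffineMap.lineMap x y t) ↔ b = true) := by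
  rw [AffineMap.apply_lineMap, AffineMap.lineMap_apply_module, smul_eq_mul, smul_eq_mul]
  cases b with
  | true =>
      have hx' : 0 < φ x := hx.2.mpr rfl
      have hy' : 0 < φ y := hy.2.mpr rfl
      have hpos : 0 < (1 - t) * φ x + t * φ y := by
        rcases eq_or_lt_of_le ht1 with h | h
        · rw [h]; simpa using hy'
        · nlinarith
      exact ⟨ne_of_gt hpos, by simp [hpos]⟩
  | false =>
      have hx' : φ x < 0 :=
        lt_of_le_of_ne (not_lt.mp (fun h => absurd (hx.2.mp h) (by simp))) hx.1
      have hy' : φ y < 0 :=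
        lt_of_le_of_ne (not_lt.mp (fun h => absurd (hy.2.mp h) (by simp))) hy.1
      have hneg : (1 - t) * φ x + t * φ y < 0 := by
        rcases eq_or_lt_of_le ht1 with h | h
        · rw [h]; simpa using hy'
        · nlinarith
      exact ⟨ne_of_lt hneg, by simp [not_lt.mpr hneg.le, hneg]⟩

open Set in
theorem ncard_realized_le (M : ℕ) : ∀ {V : Type} [AddCommGroup V] [Module ℝ V]
    [FiniteDimensional ℝ V] (g : Fin M → (V →ᵃ[ℝ] ℝ)),
    (realized g).ncard ≤ Phi M (Module.finrank ℝ V) := by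
  induction M with
  | zero =>
      intro V _ _ _ g
      calc (realized g).ncard ≤ (Set.univ : Set (Fin 0 → Bool)).ncard :=
            Set.ncard_le_ncard (Set.subset_univ _) (Set.toFinite _)
        _ = 1 := by rw [Set.ncard_univ]; simp [Nat.card_eq_fintype_card]
        _ ≤ Phi 0 (Module.finrank ℝ V) := one_le_Phi _ _
  | succ M IH =>
      intro V _ _ _ g
      classical
      set n := Module.finrank ℝ V with hn
      set R := realized g with hR
      set gdel : Fin M → (V →ᵃ[ℝ] ℝ) := fun i => g i.castSucc with hgdel
      set Rt := R ∩ {σ | σ (Fin.last M) = true} with hRt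
      set Rf := R ∩ {σ | σ (Fin.last M) = false} with hRf
      have hsplit : R = Rt ∪ Rf := by
        ext σ
        cases h : σ (Fin.last M) <;> simp [hRt, hRf, h]
      have hdisj : Disjoint Rt Rf := by
        rw [Set.disjoint_left]
        rintro σ ⟨-, h1⟩ ⟨-, h2⟩
        rw [Set.mem_setOf_eq] at h1 h2
        rw [h1] at h2
        exact Bool.noConfusion h2
      have hinj : ∀ b : Bool, Set.InjOn Fin.init (R ∩ {σ | σ (Fin.last M) = b}) := by
        intro b σ hσ τ hτ h
        funext i
        refine Fin.lastCases ?_ (fun j => congrFun h j) i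
        rw [hσ.2, hτ.2]
      have hdelmem : ∀ σ ∈ R, Fin.init σ ∈ realized gdel := by
        rintro σ ⟨x, hx⟩
        exact ⟨x, fun i => hx i.castSucc⟩
      have hcard : R.ncard = (Fin.init '' Rt ∪ Fin.init '' Rf).ncard
          + (Fin.init '' Rt ∩ Fin.init '' Rf).ncard := by
        rw [Set.ncard_union_add_ncard_inter, Set.ncard_image_of_injOn (hinj true),
          Set.ncard_image_of_injOn (hinj false), ← Set.ncard_union_eq hdisj, ← hsplit]
      have hsubdel : Fin.init '' Rt ∪ Fin.init '' Rf ⊆ realized gdel := by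
        rintro σ' (⟨σ, hσ, rfl⟩ | ⟨σ, hσ, rfl⟩)
        · exact hdelmem σ hσ.1
        · exact hdelmem σ hσ.1
      by_cases hlin : (g (Fin.last M)).linear = 0
      · -- the last functional is constant
        have hconst : ∀ x : V, g (Fin.last M) x = g (Fin.last M) 0 := by
          intro x
          conv_lhs => rw [show x = x +ᵥ (0 : V) by simp]
          rw [AffineMap.map_vadd, hlin]
          simp
        by_cases hb : g (Fin.last M) 0 = 0
        · have : R = ∅ := by
            rw [Set.eq_empty_iff_forall_notMem]
            rintro σ ⟨x, hx⟩
            exact (hx (Fin.last M)).1 (by rw [hconst x, hb])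
          rw [hR.trans (hR.symm.trans this)]
          simp
        · have hinjR : Set.InjOn Fin.init R := by
            intro σ hσ τ hτ h
            obtain ⟨x, hx⟩ := hσ
            obtain ⟨y, hy⟩ := hτ
            have h1 := (hx (Fin.last M)).2
            have h2 := (hy (Fin.last M)).2
            rw [hconst x] at h1
            rw [hconst y] at h2
            funext i
            refine Fin.lastCases ?_ (fun j => congrFun h j) i
            by_cases h0 : (0:ℝ) < g (Fin.last M) 0
            · rw [h1.mp h0, h2.mp h0]
            · cases hs : σ (Fin.last M)
              · cases ht : τ (Fin.last M)
                · rfl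
                · exact absurd (h2.mpr ht) h0
              · exact absurd (h1.mpr hs) h0
          calc R.ncard = (Fin.init '' R).ncard := (Set.ncard_image_of_injOn hinjR).symm
            _ ≤ (realized gdel).ncard :=
                Set.ncard_le_ncard (by rintro σ' ⟨σ, hσ, rfl⟩; exact hdelmem σ hσ)
                  (Set.toFinite _)
            _ ≤ Phi M n := IH gdel
            _ ≤ Phi (M + 1) n := Phi_mono_left (Nat.le_succ M) n
      · -- the last functional has nonzero linear part
        obtain ⟨v, hv⟩ : ∃ v : V, (g (Fin.last M)).linear v ≠ 0 := by
          by_contra hc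
          push_neg at hc
          exact hlin (LinearMap.ext fun w => by rw [hc w]; rfl)
        obtain ⟨n', hn'⟩ : ∃ n', n = n' + 1 := by
          refine ⟨n - 1, ?_⟩
          have hpos : 0 < n := by
            rcases Nat.eq_zero_or_pos n with h0 | h0
            · have : Subsingleton V := Module.finrank_zero_iff.mp (hn ▸ h0)
              exact absurd (by rw [Subsingleton.elim v 0, map_zero]) hv
            · exact h0
          omega
        have heval : ∀ x : V, g (Fin.last M) x = (g (Fin.last M)).linear x
            + g (Fin.last M) 0 := by
          intro x
          conv_lhs => rw [show x = x +ᵥ (0 : V) by simp]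
          rw [AffineMap.map_vadd]
          rfl
        set p₀ : V := (-(g (Fin.last M) 0) / (g (Fin.last M)).linear v) • v with hp₀def
        have hp₀ : g (Fin.last M) p₀ = 0 := by
          rw [heval, hp₀def, map_smul, smul_eq_mul]
          field_simp
          ring
        set K := LinearMap.ker (g (Fin.last M)).linear with hKdef
        have hKrank : Module.finrank ℝ K = n' := by
          have hsurj : Function.Surjective (g (Fin.last M)).linear := by
            intro r
            refine ⟨(r / (g (Fin.last M)).linear v) • v, ?_⟩
            rw [map_smul, smul_eq_mul]
            field_simp
          have hrange : LinearMap.range (g (Fin.last M)).linear = ⊤ :=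
            LinearMap.range_eq_top.mpr hsurj
          have := LinearMap.finrank_range_add_finrank_ker (g (Fin.last M)).linear
          rw [hrange, finrank_top, Module.finrank_self, ← hn, hn'] at this
          rw [hKdef]
          omega
        set e : K →ᵃ[ℝ] V :=
          ((AffineEquiv.constVAdd ℝ V p₀).toAffineMap).comp K.subtype.toAffineMap with hedef
        set h : Fin M → (K →ᵃ[ℝ] ℝ) := fun i => (g i.castSucc).comp e with hhdef
        have hboth : Fin.init '' Rt ∩ Fin.init '' Rf ⊆ realized h := by
          rintro σ' ⟨⟨σ, ⟨⟨x, hx⟩, hσlast⟩, rfl⟩, ⟨τ, ⟨⟨y, hy⟩, hτlast⟩, hτeq⟩⟩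
          rw [Set.mem_setOf_eq] at hσlast hτlast
          have hgx : 0 < g (Fin.last M) x := (hx (Fin.last M)).2.mpr hσlast
          have hgy : g (Fin.last M) y < 0 :=
            lt_of_le_of_ne (not_lt.mp (fun hpos =>
              absurd ((hy (Fin.last M)).2.mp hpos) (by rw [hτlast]; simp)))
              (hy (Fin.last M)).1
          set t : ℝ := g (Fin.last M) x / (g (Fin.last M) x - g (Fin.last M) y) with htdef
          have hden : 0 < g (Fin.last M) x - g (Fin.last M) y := by linarith
          have ht0 : 0 ≤ t := le_of_lt (div_pos hgx hden)
          have ht1 : t ≤ 1 := by rw [div_le_one hden]; linarith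
          set w : V := AffineMap.lineMap x y t with hwdef
          have hw0 : g (Fin.last M) w = 0 := by
            rw [hwdef, AffineMap.apply_lineMap, AffineMap.lineMap_apply_module,
              smul_eq_mul, smul_eq_mul, htdef]
            field_simp
            ring
          have hwK : w - p₀ ∈ K := by
            rw [hKdef, LinearMap.mem_ker, show w - p₀ = w -ᵥ p₀ from rfl,
              AffineMap.linearMap_vsub, hw0, hp₀]
            simp
          refine ⟨⟨w - p₀, hwK⟩, fun i => ?_⟩
          have hevalh : h i ⟨w - p₀, hwK⟩ = g i.castSucc w := by
            rw [hhdef]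
            simp only [AffineMap.comp_apply, hedef]
            congr 1
            show p₀ +ᵥ (w - p₀) = w
            rw [vadd_eq_add]
            abel
          rw [hevalh]
          have hτi : τ i.castSucc = Fin.init σ i := by rw [← hτeq]; rfl
          exact sign_lineMap (g i.castSucc) ht0 ht1
            ⟨(hx i.castSucc).1, (hx i.castSucc).2⟩
            ⟨(hy i.castSucc).1, hτi ▸ (hy i.castSucc).2⟩
        calc R.ncard
            = (Fin.init '' Rt ∪ Fin.init '' Rf).ncard
              + (Fin.init '' Rt ∩ Fin.init '' Rf).ncard := hcard
          _ ≤ (realized gdel).ncard + (realized h).ncard :=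
              Nat.add_le_add (Set.ncard_le_ncard hsubdel (Set.toFinite _))
                (Set.ncard_le_ncard hboth (Set.toFinite _))
          _ ≤ Phi M n + Phi M n' := by
              refine Nat.add_le_add (IH gdel) ?_
              have := IH h
              rwa [hKrank] at this
          _ = Phi (M + 1) n := by rw [hn', ← Phi_pascal]

/-- The number of connected components of a subset (with the subspace topology). -/
noncomputable def numComponents {X : Type*} [TopologicalSpace X] (S : Set X) : ℕ :=
  Nat.card (ConnectedComponents ↥S)

/-- The Top-k routing cell `V(I)` of a family of affine logits `z`. -/
def cell {N d : ℕ} (z : Fin N → ((Fin d → ℝ) →ᵃ[ℝ] ℝ)) (k : ℕ)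
    (I : Finset (Fin N)) : Set (Fin d → ℝ) :=
  {x | ∀ J : Finset (Fin N), J.card = k → ∑ j ∈ J, z j x ≤ ∑ i ∈ I, z i x}

open Set in
theorem numComponents_le_ncard_realized {d M : ℕ} {C : Set (Fin d → ℝ)} (hC : Convex ℝ C)
    (g : Fin M → ((Fin d → ℝ) →ᵃ[ℝ] ℝ)) :
    numComponents (interior C \ ⋃ j, {x | g j x = 0}) ≤ (realized g).ncard := by
  classical
  set S : Set (Fin d → ℝ) := interior C \ ⋃ j, {x | g j x = 0} with hSdef
  have hcont : ∀ j, Continuous fun x : Fin d → ℝ => g j x := by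
    intro j
    rw [AffineMap.decomp (g j)]
    exact ((g j).linear.continuous_of_finiteDimensional).add continuous_const
  have hne : ∀ (p : ↥S) (j : Fin M), g j (↑p : Fin d → ℝ) ≠ 0 := by
    intro p j
    have := p.2.2
    simp only [mem_iUnion, mem_setOf_eq, not_exists] at this
    exact this j
  set sgn : ↥S → (Fin M → Bool) := fun p j => decide (0 < g j (↑p : Fin d → ℝ)) with hsgn
  have hmem : ∀ p : ↥S, sgn p ∈ realized g := by
    intro p
    exact ⟨(↑p : Fin d → ℝ), fun j => ⟨hne p j, by simp [hsgn]⟩⟩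
  have hconst : ∀ p q : ↥S, connectedComponent p = connectedComponent q → sgn p = sgn q := by
    intro p q hcc
    funext j
    have hq : q ∈ connectedComponent p := hcc ▸ mem_connectedComponent
    have hopen1 : IsOpen {r : ↥S | 0 < g j (↑r : Fin d → ℝ)} :=
      isOpen_lt continuous_const ((hcont j).comp continuous_subtype_val)
    have hopen2 : IsOpen {r : ↥S | g j (↑r : Fin d → ℝ) < 0} :=
      isOpen_lt ((hcont j).comp continuous_subtype_val) continuous_const
    have hdis : Disjoint {r : ↥S | 0 < g j (↑r : Fin d → ℝ)}
        {r : ↥S | g j (↑r : Fin d → ℝ) < 0} := by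
      rw [Set.disjoint_left]
      intro r h1 h2
      simp only [mem_setOf_eq] at h1 h2
      exact absurd h2 (not_lt.mpr h1.le)
    have hsub : connectedComponent p ⊆ {r : ↥S | 0 < g j (↑r : Fin d → ℝ)}
        ∪ {r : ↥S | g j (↑r : Fin d → ℝ) < 0} := by
      intro r _
      rcases (hne r j).lt_or_gt with h | h
      · exact Or.inr h
      · exact Or.inl h
    rcases (isPreconnected_connectedComponent (x := p)).subset_or_subset hopen1 hopen2
        hdis hsub with h | h
    · have h1 : 0 < g j (↑p : Fin d → ℝ) := h mem_connectedComponent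
      have h2 : 0 < g j (↑q : Fin d → ℝ) := h hq
      simp [hsgn, h1, h2]
    · have h1 : g j (↑p : Fin d → ℝ) < 0 := h mem_connectedComponent
      have h2 : g j (↑q : Fin d → ℝ) < 0 := h hq
      simp [hsgn, not_lt.mpr (le_of_lt h1), not_lt.mpr (le_of_lt h2)]
  have hback : ∀ p q : ↥S, sgn p = sgn q → connectedComponent p = connectedComponent q := by
    intro p q hpq
    set T : Set (Fin d → ℝ) := segment ℝ (↑p) (↑q) with hTdef
    have hTS : T ⊆ S := by
      intro w hw
      rw [hTdef, segment_eq_image_lineMap] at hw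
      obtain ⟨t, ht, rfl⟩ := hw
      constructor
      · exact hC.interior.segment_subset p.2.1 q.2.1
          (by rw [segment_eq_image_lineMap]; exact ⟨t, ht, rfl⟩)
      · simp only [mem_iUnion, mem_setOf_eq, not_exists]
        intro j
        refine (sign_lineMap (g j) ht.1 ht.2 (b := sgn p j) ⟨hne p j, by simp [hsgn]⟩
          ⟨hne q j, ?_⟩).1
        rw [hpq]
        simp [hsgn]
    have hTpre : IsPreconnected ((Subtype.val : ↥S → (Fin d → ℝ)) ⁻¹' T) := by
      rw [← Topology.IsInducing.subtypeVal.isPreconnected_image]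
      rw [Subtype.image_preimage_coe, Set.inter_eq_right.mpr hTS]
      exact (convex_segment _ _).isPreconnected
    have hqp : q ∈ connectedComponent p :=
      hTpre.subset_connectedComponent (left_mem_segment ℝ _ _) (right_mem_segment ℝ _ _)
    exact (connectedComponent_eq hqp)
  let F : ConnectedComponents ↥S → ↥(realized g) :=
    Quotient.lift (fun p : ↥S => (⟨sgn p, hmem p⟩ : ↥(realized g)))
      (fun p q hpq => Subtype.ext (hconst p q hpq))
  have hFinj : Function.Injective F := by
    intro a b hab
    obtain ⟨p, rfl⟩ := ConnectedComponents.surjective_coe a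
    obtain ⟨q, rfl⟩ := ConnectedComponents.surjective_coe b
    exact ConnectedComponents.coe_eq_coe.mpr
      (hback p q (congrArg Subtype.val hab))
  calc numComponents S = Nat.card (ConnectedComponents ↥S) := rfl
    _ ≤ Nat.card ↥(realized g) := Nat.card_le_card_of_injective F hFinj
    _ = (realized g).ncard := Nat.card_coe_set_eq _

lemma convex_cell {N d : ℕ} (z : Fin N → ((Fin d → ℝ) →ᵃ[ℝ] ℝ)) (k : ℕ)
    (I : Finset (Fin N)) : Convex ℝ (cell z k I) := by
  intro x hx y hy a b ha hb hab
  intro J hJ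
  have hcomb : ∀ φ : (Fin d → ℝ) →ᵃ[ℝ] ℝ, φ (a • x + b • y) = a * φ x + b * φ y := by
    intro φ
    have hxy : a • x + b • y = AffineMap.lineMap x y b := by
      rw [AffineMap.lineMap_apply_module, show (1 : ℝ) - b = a by linarith]
    rw [hxy, AffineMap.apply_lineMap, AffineMap.lineMap_apply_module, smul_eq_mul,
      smul_eq_mul, show (1 : ℝ) - b = a by linarith]
  simp only [hcomb]
  rw [Finset.sum_add_distrib, Finset.sum_add_distrib, ← Finset.mul_sum, ← Finset.mul_sum,
    ← Finset.mul_sum, ← Finset.mul_sum]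
  have h1 := mul_le_mul_of_nonneg_left (hx J hJ) ha
  have h2 := mul_le_mul_of_nonneg_left (hy J hJ) hb
  linarith

/-- An affine functional `x ↦ l x - a` from a linear functional and a constant. -/
noncomputable def affOf {d : ℕ} (l : (Fin d → ℝ) →ₗ[ℝ] ℝ) (a : ℝ) : (Fin d → ℝ) →ᵃ[ℝ] ℝ where
  toFun := fun x => l x - a
  linear := l
  map_vadd' := by
    intro p v
    simp only [vadd_eq_add, map_add]
    ring

@[simp] lemma affOf_apply {d : ℕ} (l : (Fin d → ℝ) →ₗ[ℝ] ℝ) (a : ℝ) (x : Fin d → ℝ) :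
    affOf l a x = l x - a := rfl

/-- Combinatorial Slicing upper bound: for a Top-k MoE layer with
`N` experts, each expert `i` carrying a family `A_i` of `H` affine hyperplanes
`{x : f_{i,m}(x) = c_{i,m}}`, and `A_I := ⋃_{i ∈ I} A_i` for each `k`-subset `I`,
the total number of linear regions, i.e. the sum over all `k`-subsets `I` of the
number of connected components of `interior(V(I)) \ ⋃ A_I`, is at most
`C(N, k) · Φ(kH, d)`. -/
theorem topk_capacity_upper_bound {N k d H : ℕ}
    (hN : 1 ≤ N) (hk1 : 1 ≤ k) (hkN : k ≤ N) (hd : 1 ≤ d)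
    (z : Fin N → ((Fin d → ℝ) →ᵃ[ℝ] ℝ))
    (f : Fin N → Fin H → ((Fin d → ℝ) →ₗ[ℝ] ℝ)) (c : Fin N → Fin H → ℝ)
    (hf : ∀ i m, f i m ≠ 0) :
    ∑ I ∈ Finset.powersetCard k (Finset.univ : Finset (Fin N)),
        numComponents
          (interior (cell z k I) \
            ⋃ i ∈ I, ⋃ m : Fin H, {x : Fin d → ℝ | f i m x = c i m})
      ≤ N.choose k * Phi (k * H) d := by
  classical
  have hbound : ∀ I ∈ Finset.powersetCard k (Finset.univ : Finset (Fin N)),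
      numComponents
          (interior (cell z k I) \
            ⋃ i ∈ I, ⋃ m : Fin H, {x : Fin d → ℝ | f i m x = c i m})
        ≤ Phi (k * H) d := by
    intro I hI
    have hIcard : I.card = k := (Finset.mem_powersetCard.mp hI).2
    have hcard : Fintype.card (↥I × Fin H) = k * H := by
      simp [hIcard]
    let e : (↥I × Fin H) ≃ Fin (k * H) := Fintype.equivFinOfCardEq hcard
    let g : Fin (k * H) → ((Fin d → ℝ) →ᵃ[ℝ] ℝ) := fun j =>
      affOf (f (↑(e.symm j).1) (e.symm j).2) (c (↑(e.symm j).1) (e.symm j).2)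
    have hUnion : (⋃ i ∈ I, ⋃ m : Fin H, {x : Fin d → ℝ | f i m x = c i m})
        = ⋃ j, {x : Fin d → ℝ | g j x = 0} := by
      ext x
      simp only [Set.mem_iUnion, Set.mem_setOf_eq, affOf_apply, sub_eq_zero, g]
      constructor
      · rintro ⟨i, hi, m, hm⟩
        exact ⟨e (⟨i, hi⟩, m), by simp [hm]⟩
      · rintro ⟨j, hj⟩
        exact ⟨↑(e.symm j).1, (e.symm j).1.2, (e.symm j).2, hj⟩
    rw [hUnion]
    calc numComponents (interior (cell z k I) \ ⋃ j, {x : Fin d → ℝ | g j x = 0})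
        ≤ (realized g).ncard := numComponents_le_ncard_realized (convex_cell z k I) g
      _ ≤ Phi (k * H) (Module.finrank ℝ (Fin d → ℝ)) := ncard_realized_le _ g
      _ = Phi (k * H) d := by rw [Module.finrank_fin_fun]
  calc ∑ I ∈ Finset.powersetCard k (Finset.univ : Finset (Fin N)),
        numComponents
          (interior (cell z k I) \
            ⋃ i ∈ I, ⋃ m : Fin H, {x : Fin d → ℝ | f i m x = c i m})
      ≤ ∑ _I ∈ Finset.powersetCard k (Finset.univ : Finset (Fin N)), Phi (k * H) d :=
        Finset.sum_le_sum hbound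
    _ = (Finset.powersetCard k (Finset.univ : Finset (Fin N))).card * Phi (k * H) d := by
        rw [Finset.sum_const, smul_eq_mul]
    _ = N.choose k * Phi (k * H) d := by
        rw [Finset.card_powersetCard, Finset.card_univ, Fintype.card_fin]
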